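/- Let V, W be finite-dimensional real vector spaces, φ : V → W a linear map, and D_W ⊆ W × W* a Lagrangian subspace with respect to the pairing ⟨(u,α),(v,β)⟩ = β(u) + α(v). Define the pullback φ*D_W = {(v,α) ∈ V × V* : ∃(w,β) ∈ D_W, φ(v) = w and α = β ∘ φ}. Then φ*D_W is a Lagrangian subspace of V × V*, i.e. (φ*D_W)^⊥ = φ*D_W. -/

import Mathlib

/-
For `(v, α) ∈ (φ*D)^⊥` we need `β ∈ W*` with `β ∘ φ = α` and `β w = -ε (φ v)` for all
`(w, ε) ∈ D`, for then `(φ v, β) ∈ D^⊥ = D`. Together these conditions prescribe `β` along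
`Ψ : D × V → W, ((w, ε), x) ↦ w + φ x`, and they are consistent because orthogonality of `(v, α)`
to `(-x, ε ∘ φ) ∈ φ*D` says precisely that the prescription kills `ker Ψ`; over a field such a
functional factors through `Ψ`. The inclusion `φ*D ⊆ (φ*D)^⊥` holds because the pairing of two
pulled-back elements is the pairing of the original ones in `W × W*`.
-/

open Module

/-- The Pontryagin pairing `⟨(u,α),(v,β)⟩ = β(u) + α(v)` on `V × V*`. -/
noncomputable def pontryaginPair (V : Type*) [AddCommGroup V] [Module ℝ V] :
    LinearMap.BilinForm ℝ (V × Module.Dual ℝ V) :=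
  LinearMap.mk₂ ℝ (fun p q => q.2 p.1 + p.2 q.1)
    (by intro p p' q; simp; ring)
    (by intro c p q; simp; ring)
    (by intro p q q'; simp; ring)
    (by intro c p q; simp; ring)

variable {V W : Type*} [AddCommGroup V] [Module ℝ V] [AddCommGroup W] [Module ℝ W]

/-- The backward image `φ*D = {(v,α) : ∃ (w,β) ∈ D, φ v = w, α = β ∘ φ}` of a subspace
`D ⊆ W × W*` under a linear map `φ : V → W`. -/
noncomputable def backwardImage (φ : V →ₗ[ℝ] W) (D : Submodule ℝ (W × Module.Dual ℝ W)) :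
    Submodule ℝ (V × Module.Dual ℝ V) :=
  Submodule.map (LinearMap.prodMap (LinearMap.id : V →ₗ[ℝ] V) φ.dualMap)
    (Submodule.comap (LinearMap.prodMap φ (LinearMap.id : Module.Dual ℝ W →ₗ[ℝ] Module.Dual ℝ W)) D)

/-- The forward image `φ(D) = {(φ v, β) : (v, β ∘ φ) ∈ D}` of a subspace `D ⊆ V × V*`
under a linear map `φ : V → W`. -/
noncomputable def forwardImage (φ : V →ₗ[ℝ] W) (D : Submodule ℝ (V × Module.Dual ℝ V)) :
    Submodule ℝ (W × Module.Dual ℝ W) :=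
  Submodule.map (LinearMap.prodMap φ (LinearMap.id : Module.Dual ℝ W →ₗ[ℝ] Module.Dual ℝ W))
    (Submodule.comap (LinearMap.prodMap (LinearMap.id : V →ₗ[ℝ] V) φ.dualMap) D)

lemma LinearMap.exists_dualMap_eq_of_ker_le {K V₁ V₂ : Type*} [Field K] [AddCommGroup V₁]
    [Module K V₁] [AddCommGroup V₂] [Module K V₂] (f : V₁ →ₗ[K] V₂) (g : Dual K V₁)
    (h : LinearMap.ker f ≤ LinearMap.ker g) : ∃ β : Dual K V₂, f.dualMap β = g := by
  have : g ∈ (LinearMap.ker f).dualAnnihilator :=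
    (Submodule.mem_dualAnnihilator g).2 fun _ hx => h hx
  rwa [← LinearMap.range_dualMap_eq_dualAnnihilator_ker] at this

@[simp]
lemma pontryaginPair_apply (p q : V × Dual ℝ V) : pontryaginPair V p q = q.2 p.1 + p.2 q.1 :=
  rfl

lemma pontryaginPair_dualMap (φ : V →ₗ[ℝ] W) (v v' : V) (β β' : Dual ℝ W) :
    pontryaginPair V (v, φ.dualMap β) (v', φ.dualMap β') = pontryaginPair W (φ v, β) (φ v', β') :=
  rfl

lemma mem_backwardImage {φ : V →ₗ[ℝ] W} {D : Submodule ℝ (W × Dual ℝ W)} {v : V}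
    {α : Dual ℝ V} : (v, α) ∈ backwardImage φ D ↔ ∃ β, (φ v, β) ∈ D ∧ φ.dualMap β = α := by
  constructor
  · rintro ⟨⟨v', β⟩, hmem, heq⟩
    simp only [LinearMap.prodMap_apply, LinearMap.id_apply, Prod.mk.injEq] at heq
    obtain ⟨rfl, rfl⟩ := heq
    exact ⟨β, hmem, rfl⟩
  · rintro ⟨β, hmem, rfl⟩
    exact ⟨(v, β), hmem, rfl⟩

lemma backwardImage_le_orthogonal (φ : V →ₗ[ℝ] W) {D : Submodule ℝ (W × Dual ℝ W)}
    (hD : D ≤ (pontryaginPair W).orthogonal D) :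
    backwardImage φ D ≤ (pontryaginPair V).orthogonal (backwardImage φ D) := by
  rintro ⟨v, α⟩ hv ⟨v', α'⟩ hv'
  obtain ⟨β, hβ, rfl⟩ := mem_backwardImage.1 hv
  obtain ⟨β', hβ', rfl⟩ := mem_backwardImage.1 hv'
  rw [pontryaginPair_dualMap]
  exact hD hβ _ hβ'

lemma orthogonal_backwardImage_le (φ : V →ₗ[ℝ] W) {D : Submodule ℝ (W × Dual ℝ W)}
    (hD : (pontryaginPair W).orthogonal D ≤ D) :
    (pontryaginPair V).orthogonal (backwardImage φ D) ≤ backwardImage φ D := by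
  rintro ⟨v, α⟩ hva
  let Ψ : D × V →ₗ[ℝ] W := (LinearMap.fst ℝ W (Dual ℝ W) ∘ₗ D.subtype).coprod φ
  let G : Dual ℝ (D × V) :=
    (-(Dual.eval ℝ W (φ v) ∘ₗ LinearMap.snd ℝ W (Dual ℝ W) ∘ₗ D.subtype)).coprod α
  have hker : LinearMap.ker Ψ ≤ LinearMap.ker G := by
    rintro ⟨⟨⟨w, ε⟩, hwε⟩, x⟩ hx
    have hw : w = φ (-x) := by
      simpa [Ψ, add_eq_zero_iff_eq_neg] using hx
    have hmem : (-x, φ.dualMap ε) ∈ backwardImage φ D := mem_backwardImage.2 ⟨ε, hw ▸ hwε, rfl⟩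
    have := hva _ hmem
    simp only [pontryaginPair_apply, LinearMap.dualMap_apply, map_neg] at this
    simp only [LinearMap.mem_ker, LinearMap.coprod_apply, LinearMap.neg_apply,
      LinearMap.coe_comp, LinearMap.coe_snd, Submodule.coe_subtype, Function.comp_apply,
      Dual.eval_apply, G]
    linarith
  -- Naming `V₁` avoids a costly unification of the instances on `D × V`.
  obtain ⟨β, hβ⟩ := LinearMap.exists_dualMap_eq_of_ker_le (V₁ := D × V) Ψ G hker
  have hβD : ∀ d ∈ D, β d.1 = -d.2 (φ v) := by
    intro d hd
    simpa [Ψ, G] using LinearMap.congr_fun hβ (⟨d, hd⟩, 0)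
  have hβφ : ∀ x, β (φ x) = α x := by
    intro x
    simpa [Ψ, G] using LinearMap.congr_fun hβ (0, x)
  refine mem_backwardImage.2 ⟨β, hD fun d hd => ?_, LinearMap.ext hβφ⟩
  simp [hβD d hd]

theorem backwardImage_lagrangian_general
    (φ : V →ₗ[ℝ] W) (D : Submodule ℝ (W × Module.Dual ℝ W))
    (hD : LinearMap.BilinForm.orthogonal (pontryaginPair W) D = D) :
    LinearMap.BilinForm.orthogonal (pontryaginPair V) (backwardImage φ D)
      = backwardImage φ D :=
  le_antisymm (orthogonal_backwardImage_le φ hD.le) (backwardImage_le_orthogonal φ hD.ge)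

/-- The backward image of a Lagrangian subspace is Lagrangian. -/
theorem backwardImage_lagrangian [FiniteDimensional ℝ V] [FiniteDimensional ℝ W]
    (φ : V →ₗ[ℝ] W) (D : Submodule ℝ (W × Module.Dual ℝ W))
    (hD : LinearMap.BilinForm.orthogonal (pontryaginPair W) D = D) :
    LinearMap.BilinForm.orthogonal (pontryaginPair V) (backwardImage φ D)
      = backwardImage φ D :=
  backwardImage_lagrangian_general φ D hD
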